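/- Let ν ≥ 1/2 and let d ≥ 1 be an integer. Then the prefactor defined by the recursion β(1,ν) = 1/(2ν), β(d,ν) = (4 + 2/(2ν + d − 1)) β(d−1,ν) for d > 1, satisfies β(d,ν) ≤ 5^{d−1}/(2ν); consequently, for every integer m ≥ 1, the half-space lattice sum satisfies I(d,ν,m) ≤ 5^{d−1} / (2ν m^{2ν}). -/

import Mathlib

/-! The recursion factor `4 + 2 / (2ν + d - 1)` is at most `5` as soon as `2ν ≥ 1`.

For the lattice sum, summing out one coordinate `k ∈ ℤ` of `(A + k²)^(-s)`, with `A ≥ 4` and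
`s ≥ 3/2`, costs at most a factor `5` and lowers the exponent by `1/2`: split the sum at
`k = ⌈√A⌉`, bound the head termwise by `A^(-s)` and the tail by `k^(-2s)`. Removing the `d - 1`
transverse coordinates this way leaves `5^(d-1) Σ_{n>m} n^(-2ν-1)`, and Bernoulli's inequality
gives the telescoping bound `t (a+1)^(-t-1) ≤ a^(-t) - (a+1)^(-t)`, whence
`Σ_{n>m} n^(-2ν-1) ≤ m^(-2ν) / (2ν)`. All sums are taken in `ℝ≥0∞`, where Fubini and termwise
comparison need no summability. -/

/-- The prefactor `β(d,ν)`: `β(1,ν) = 1/(2ν)` and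
`β(d,ν) = (4 + 2/(2ν+d−1)) β(d−1,ν)` for `d > 1`.  (The value at `d = 0` is unused.) -/
noncomputable def betaC (ν : ℝ) : ℕ → ℝ
  | 0 => 0
  | 1 => 1 / (2 * ν)
  | d + 2 => (4 + 2 / (2 * ν + (d : ℝ) + 1)) * betaC ν (d + 1)

/-- The half-space lattice sum
`I(d,ν,m) = Σ_{n>m} Σ_{q ∈ ℤ^{d−1}} (n² + |q|²)^{−ν−d/2}`. -/
noncomputable def Isum (d : ℕ) (ν : ℝ) (m : ℕ) : ℝ :=
  ∑' p : {n : ℤ // (m : ℤ) < n} × (Fin (d - 1) → ℤ),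
    ((p.1.1 : ℝ) ^ 2 + ∑ i, (p.2 i : ℝ) ^ 2) ^ (-(ν + (d : ℝ) / 2))

theorem betaC_nonneg {ν : ℝ} (hν : 0 < ν) : ∀ d, 0 ≤ betaC ν d
  | 0 => le_rfl
  | 1 => by rw [betaC]; positivity
  | d + 2 => mul_nonneg (by positivity) (betaC_nonneg hν (d + 1))

theorem betaC_succ_le {ν : ℝ} (hν : 1 / 2 ≤ ν) : ∀ d : ℕ, betaC ν (d + 1) ≤ 5 ^ d / (2 * ν)
  | 0 => by simp only [betaC, pow_zero, one_div, le_refl]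
  | d + 1 => by
    have hfactor : 4 + 2 / (2 * ν + (d : ℝ) + 1) ≤ 5 := by
      have : 2 / (2 * ν + (d : ℝ) + 1) ≤ 1 := by
        rw [div_le_one (by positivity)]; linarith [show (0 : ℝ) ≤ d by positivity]
      linarith
    calc betaC ν (d + 2) = (4 + 2 / (2 * ν + (d : ℝ) + 1)) * betaC ν (d + 1) := rfl
      _ ≤ 5 * (5 ^ d / (2 * ν)) :=
        mul_le_mul hfactor (betaC_succ_le hν d) (betaC_nonneg (by linarith) _) (by norm_num)
      _ = 5 ^ (d + 1) / (2 * ν) := by ring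

theorem betaC_le {ν : ℝ} (hν : 1 / 2 ≤ ν) {d : ℕ} (hd : 1 ≤ d) :
    betaC ν d ≤ 5 ^ (d - 1) / (2 * ν) := by
  obtain ⟨d, rfl⟩ := Nat.exists_eq_add_of_le' hd
  exact betaC_succ_le hν d

theorem mul_rpow_neg_add_one_le_sub {a t : ℝ} (ha : 0 < a) (ht : 0 ≤ t) :
    t * (a + 1) ^ (-(t + 1)) ≤ a ^ (-t) - (a + 1) ^ (-t) := by
  have hb : 0 < a + 1 := by linarith
  set r := (a + 1) / a
  -- Bernoulli's inequality with exponent `t + 1` (not `t`, which may be `< 1`) at `1 / a`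
  have hrt : (a + 1 + t) / (a + 1) ≤ r ^ t := by
    have h := one_add_mul_self_le_rpow_one_add (by linarith [one_div_pos.2 ha] : -1 ≤ 1 / a)
      (by linarith : 1 ≤ t + 1)
    rw [show 1 + 1 / a = r by simp only [r]; field_simp, Real.rpow_add_one (by positivity)] at h
    rw [div_le_iff₀ hb]
    have key := mul_le_mul_of_nonneg_right h ha.le
    rwa [show (1 + (t + 1) * (1 / a)) * a = a + 1 + t by field_simp; ring,
      show r ^ t * r * a = r ^ t * (a + 1) by simp only [r]; field_simp] at key
  have ha_rpow : a ^ (-t) = (a + 1) ^ (-t) * r ^ t := by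
    rw [Real.div_rpow hb.le ha.le, Real.rpow_neg hb.le, Real.rpow_neg ha.le]
    field_simp
  have hb_rpow : (a + 1) ^ (-(t + 1)) = (a + 1) ^ (-t) / (a + 1) := by
    rw [neg_add, Real.rpow_add hb, Real.rpow_neg_one, div_eq_mul_inv]
  rw [ha_rpow, hb_rpow]
  calc t * ((a + 1) ^ (-t) / (a + 1)) = (a + 1) ^ (-t) * ((a + 1 + t) / (a + 1) - 1) := by
        field_simp; ring
    _ ≤ (a + 1) ^ (-t) * (r ^ t - 1) := by gcongr
    _ = _ := by ring

theorem tsum_ofReal_rpow_neg_add_one_le {a t : ℝ} (ha : 0 < a) (ht : 0 < t) :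
    ∑' n : ℕ, ENNReal.ofReal ((a + 1 + n) ^ (-(t + 1))) ≤ ENNReal.ofReal (a ^ (-t) / t) := by
  set g : ℕ → ℝ := fun n => (a + n) ^ (-t)
  have hterm (n : ℕ) : (a + 1 + n) ^ (-(t + 1)) ≤ (g n - g (n + 1)) / t := by
    rw [le_div_iff₀ ht, mul_comm]
    have := mul_rpow_neg_add_one_le_sub (a := a + n) (by positivity) ht.le
    simp only [g, Nat.cast_succ, ← add_assoc, add_right_comm a 1] at this ⊢
    exact this
  refine ENNReal.tsum_le_of_sum_range_le fun N => ?_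
  rw [← ENNReal.ofReal_sum_of_nonneg fun n _ => by positivity]
  refine ENNReal.ofReal_le_ofReal ?_
  calc ∑ n ∈ Finset.range N, (a + 1 + n) ^ (-(t + 1))
      ≤ ∑ n ∈ Finset.range N, (g n - g (n + 1)) / t := Finset.sum_le_sum fun n _ => hterm n
    _ = (g 0 - g N) / t := by rw [← Finset.sum_div, Finset.sum_range_sub']
    _ ≤ g 0 / t := by
      have : 0 ≤ g N := by positivity
      gcongr
      linarith
    _ = a ^ (-t) / t := by simp only [g, Nat.cast_zero, add_zero]

theorem tsum_ofReal_rpow_add_sq_succ_le {A s : ℝ} (hA : 0 < A) (hs : 1 / 2 < s) {K : ℕ}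
    (hK : 0 < K) :
    ∑' n : ℕ, ENNReal.ofReal ((A + ((n : ℝ) + 1) ^ 2) ^ (-s)) ≤
      ENNReal.ofReal (K * A ^ (-s) + (K : ℝ) ^ (-(2 * s - 1)) / (2 * s - 1)) := by
  have head : ∑ n ∈ Finset.range K, ENNReal.ofReal ((A + ((n : ℝ) + 1) ^ 2) ^ (-s)) ≤
      ENNReal.ofReal (K * A ^ (-s)) := by
    calc _ ≤ ∑ _n ∈ Finset.range K, ENNReal.ofReal (A ^ (-s)) := by
          refine Finset.sum_le_sum fun n _ => ENNReal.ofReal_le_ofReal ?_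
          exact Real.rpow_le_rpow_of_nonpos hA (le_add_of_nonneg_right (by positivity))
            (by linarith)
      _ = ENNReal.ofReal (K * A ^ (-s)) := by
          rw [Finset.sum_const, Finset.card_range, nsmul_eq_mul, ENNReal.ofReal_mul (by positivity),
            ENNReal.ofReal_natCast]
  have tail : ∑' n : ℕ, ENNReal.ofReal ((A + (((n + K : ℕ) : ℝ) + 1) ^ 2) ^ (-s)) ≤
      ENNReal.ofReal ((K : ℝ) ^ (-(2 * s - 1)) / (2 * s - 1)) := by
    refine le_trans (ENNReal.tsum_le_tsum fun n => ENNReal.ofReal_le_ofReal ?_)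
      (tsum_ofReal_rpow_neg_add_one_le (a := K) (by positivity) (by linarith))
    have hx : (0 : ℝ) < K + 1 + n := by positivity
    calc (A + (((n + K : ℕ) : ℝ) + 1) ^ 2) ^ (-s) ≤ (((K : ℝ) + 1 + n) ^ 2) ^ (-s) := by
          refine Real.rpow_le_rpow_of_nonpos (by positivity) ?_ (by linarith)
          push_cast
          linarith [show ((n : ℝ) + K + 1) ^ 2 = ((K : ℝ) + 1 + n) ^ 2 by ring]
      _ = ((K : ℝ) + 1 + n) ^ (-(2 * s - 1 + 1)) := by
          rw [← Real.rpow_natCast, ← Real.rpow_mul hx.le]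
          congr 1
          push_cast
          ring
  rw [← Summable.sum_add_tsum_nat_add' (k := K) ENNReal.summable,
    ENNReal.ofReal_add (by positivity) (div_nonneg (by positivity) (by linarith))]
  exact add_le_add head tail

theorem tsum_ofReal_rpow_add_sq_int_le {A s : ℝ} (hA : 4 ≤ A) (hs : 3 / 2 ≤ s) :
    ∑' k : ℤ, ENNReal.ofReal ((A + (k : ℝ) ^ 2) ^ (-s)) ≤
      5 * ENNReal.ofReal (A ^ (-(s - 1 / 2))) := by
  have hA0 : 0 < A := by linarith
  have hR : 2 ≤ √A := Real.le_sqrt_of_sq_le (by linarith)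
  set K := ⌈√A⌉₊
  have hRK : √A ≤ K := Nat.le_ceil _
  have hKR : (K : ℝ) ≤ √A + 1 := (Nat.ceil_lt_add_one (by positivity)).le
  have hP : 0 ≤ A ^ (-s) := by positivity
  have hPR : A ^ (-s) * √A = A ^ (-(s - 1 / 2)) := by
    rw [Real.sqrt_eq_rpow, ← Real.rpow_add hA0]; ring_nf
  have hP2 : A ^ (-s) ≤ A ^ (-(s - 1 / 2)) / 2 := by nlinarith
  have hKP : K * A ^ (-s) ≤ 3 / 2 * A ^ (-(s - 1 / 2)) := by
    nlinarith [mul_le_mul_of_nonneg_right hKR hP]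
  have hK : (K : ℝ) ^ (-(2 * s - 1)) ≤ A ^ (-(s - 1 / 2)) :=
    calc (K : ℝ) ^ (-(2 * s - 1)) ≤ √A ^ (-(2 * s - 1)) :=
          Real.rpow_le_rpow_of_nonpos (by positivity) hRK (by linarith)
      _ = A ^ (-(s - 1 / 2)) := by rw [Real.sqrt_eq_rpow, ← Real.rpow_mul hA0.le]; ring_nf
  have hT : 0 ≤ (K : ℝ) ^ (-(2 * s - 1)) / (2 * s - 1) := div_nonneg (by positivity) (by linarith)
  have hT2 : (K : ℝ) ^ (-(2 * s - 1)) / (2 * s - 1) ≤ A ^ (-(s - 1 / 2)) / 2 := by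
    rw [div_le_div_iff₀ (by linarith) (by norm_num)]
    nlinarith
  have half := tsum_ofReal_rpow_add_sq_succ_le hA0 (by linarith : 1 / 2 < s)
    (Nat.ceil_pos.2 (by positivity : 0 < √A))
  calc ∑' k : ℤ, ENNReal.ofReal ((A + (k : ℝ) ^ 2) ^ (-s))
      = (∑' n : ℕ, ENNReal.ofReal ((A + ((n : ℝ) + 1) ^ 2) ^ (-s))) + ENNReal.ofReal (A ^ (-s)) +
          ∑' n : ℕ, ENNReal.ofReal ((A + ((n : ℝ) + 1) ^ 2) ^ (-s)) := by
        rw [tsum_of_add_one_of_neg_add_one ENNReal.summable ENNReal.summable]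
        push_cast
        simp only [neg_sq, zero_pow two_ne_zero, add_zero]
    _ ≤ _ := add_le_add (add_le_add half le_rfl) half
    _ ≤ 5 * ENNReal.ofReal (A ^ (-(s - 1 / 2))) := by
        rw [← ENNReal.ofReal_add (by positivity) hP, ← ENNReal.ofReal_add (by positivity)
          (by positivity), ← ENNReal.ofReal_ofNat 5, ← ENNReal.ofReal_mul (by norm_num)]
        refine ENNReal.ofReal_le_ofReal ?_
        linarith

theorem tsum_ofReal_rpow_add_sq_pi_le (c : ℕ) {A s : ℝ} (hA : 4 ≤ A) (hs : c / 2 + 1 ≤ s) :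
    ∑' q : Fin c → ℤ, ENNReal.ofReal ((A + ∑ i, (q i : ℝ) ^ 2) ^ (-s)) ≤
      5 ^ c * ENNReal.ofReal (A ^ (-(s - c / 2))) := by
  induction c generalizing s with
  | zero => simp
  | succ c ih =>
    have hsum (k : ℤ) (q : Fin c → ℤ) : A + ∑ i, ((Fin.cons k q : Fin (c + 1) → ℤ) i : ℝ) ^ 2 =
        (A + ∑ i, (q i : ℝ) ^ 2) + k ^ 2 := by
      simp only [Fin.sum_univ_succ, Fin.cons_zero, Fin.cons_succ]
      ring
    rw [← (Fin.consEquiv fun _ => ℤ).tsum_eq, ENNReal.tsum_prod', ENNReal.tsum_comm]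
    calc _ ≤ ∑' q : Fin c → ℤ, 5 * ENNReal.ofReal ((A + ∑ i, (q i : ℝ) ^ 2) ^ (-(s - 1 / 2))) := by
          refine ENNReal.tsum_le_tsum fun q => ?_
          have hA' : 4 ≤ A + ∑ i, (q i : ℝ) ^ 2 := by
            linarith [show 0 ≤ ∑ i, (q i : ℝ) ^ 2 by positivity]
          have hs' : 3 / 2 ≤ s := by push_cast at hs; linarith [show (0 : ℝ) ≤ c by positivity]
          simp only [Fin.consEquiv_apply, hsum]
          exact tsum_ofReal_rpow_add_sq_int_le hA' hs'
      _ ≤ 5 ^ (c + 1) * ENNReal.ofReal (A ^ (-(s - ↑(c + 1) / 2))) := by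
          rw [ENNReal.tsum_mul_left, pow_succ', mul_assoc,
            show -(s - ↑(c + 1) / 2) = -(s - 1 / 2 - c / 2) by push_cast; ring]
          gcongr
          exact ih (by push_cast at hs; linarith)

def natEquivIntGt (m : ℤ) : ℕ ≃ {n : ℤ // m < n} where
  toFun j := ⟨m + 1 + j, by omega⟩
  invFun n := (n.1 - m - 1).toNat
  left_inv j := by dsimp only; omega
  right_inv n := Subtype.ext (by dsimp only; omega)

theorem tsum_ofReal_rpow_neg_int_gt_le {m : ℕ} (hm : 0 < m) {t : ℝ} (ht : 0 < t) :
    ∑' n : {n : ℤ // (m : ℤ) < n}, ENNReal.ofReal ((n.1 : ℝ) ^ (-(t + 1))) ≤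
      ENNReal.ofReal ((m : ℝ) ^ (-t) / t) := by
  rw [← (natEquivIntGt m).tsum_eq]
  simpa [natEquivIntGt] using tsum_ofReal_rpow_neg_add_one_le (a := m) (by positivity) ht

theorem tsum_ofReal_halfSpace_le {ν : ℝ} (hν : 1 / 2 ≤ ν) {d m : ℕ} (hd : 1 ≤ d) (hm : 1 ≤ m) :
    ∑' p : {n : ℤ // (m : ℤ) < n} × (Fin (d - 1) → ℤ),
      ENNReal.ofReal (((p.1.1 : ℝ) ^ 2 + ∑ i, (p.2 i : ℝ) ^ 2) ^ (-(ν + (d : ℝ) / 2))) ≤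
      ENNReal.ofReal (5 ^ (d - 1) / (2 * ν * (m : ℝ) ^ (2 * ν))) := by
  have hd' : ((d - 1 : ℕ) : ℝ) = d - 1 := by rw [Nat.cast_sub hd, Nat.cast_one]
  have hmn (n : {n : ℤ // (m : ℤ) < n}) : (2 : ℝ) ≤ n.1 := by
    have := n.2; exact_mod_cast (by omega : (2 : ℤ) ≤ n.1)
  rw [ENNReal.tsum_prod']
  calc ∑' (n : {n : ℤ // (m : ℤ) < n}) (q : Fin (d - 1) → ℤ),
        ENNReal.ofReal (((n.1 : ℝ) ^ 2 + ∑ i, (q i : ℝ) ^ 2) ^ (-(ν + (d : ℝ) / 2)))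
      ≤ ∑' n : {n : ℤ // (m : ℤ) < n},
          5 ^ (d - 1) * ENNReal.ofReal ((n.1 : ℝ) ^ (-(2 * ν + 1))) := by
        refine ENNReal.tsum_le_tsum fun n => ?_
        have hn := hmn n
        have hexp : ((n.1 : ℝ) ^ 2) ^ (-(ν + (d : ℝ) / 2 - ((d - 1 : ℕ) : ℝ) / 2)) =
            (n.1 : ℝ) ^ (-(2 * ν + 1)) := by
          rw [← Real.rpow_natCast, ← Real.rpow_mul (by linarith), hd']
          congr 1; push_cast; ring
        rw [← hexp]
        exact tsum_ofReal_rpow_add_sq_pi_le _ (by nlinarith) (by rw [hd']; linarith)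
    _ ≤ 5 ^ (d - 1) * ENNReal.ofReal ((m : ℝ) ^ (-(2 * ν)) / (2 * ν)) := by
        rw [ENNReal.tsum_mul_left]
        gcongr
        exact tsum_ofReal_rpow_neg_int_gt_le hm (by linarith)
    _ = ENNReal.ofReal (5 ^ (d - 1) / (2 * ν * (m : ℝ) ^ (2 * ν))) := by
        rw [← ENNReal.ofReal_ofNat 5, ← ENNReal.ofReal_pow (by norm_num),
          ← ENNReal.ofReal_mul (by positivity),
          Real.rpow_neg (by positivity)]
        congr 1
        field_simp

theorem tsum_le_of_tsum_ofReal_le {α : Type*} {f : α → ℝ} {C : ℝ} (hf : ∀ a, 0 ≤ f a) (hC : 0 ≤ C)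
    (h : ∑' a, ENNReal.ofReal (f a) ≤ ENNReal.ofReal C) : ∑' a, f a ≤ C :=
  calc ∑' a, f a = ∑' a, (ENNReal.ofReal (f a)).toReal := by
        simp only [ENNReal.toReal_ofReal (hf _)]
    _ = (∑' a, ENNReal.ofReal (f a)).toReal :=
      (ENNReal.tsum_toReal_eq fun _ => ENNReal.ofReal_ne_top).symm
    _ ≤ C := ENNReal.toReal_le_of_le_ofReal hC h

theorem Isum_le {ν : ℝ} (hν : 1 / 2 ≤ ν) {d m : ℕ} (hd : 1 ≤ d) (hm : 1 ≤ m) :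
    Isum d ν m ≤ 5 ^ (d - 1) / (2 * ν * (m : ℝ) ^ (2 * ν)) :=
  tsum_le_of_tsum_ofReal_le (fun _ => by positivity)
    (div_nonneg (by positivity) (mul_nonneg (by linarith) (by positivity)))
    (tsum_ofReal_halfSpace_le hν hd hm)

theorem stmt_7 (ν : ℝ) (hν : 1 / 2 ≤ ν) (d : ℕ) (hd : 1 ≤ d) :
    betaC ν d ≤ 5 ^ (d - 1) / (2 * ν) ∧
    ∀ m : ℕ, 1 ≤ m → Isum d ν m ≤ 5 ^ (d - 1) / (2 * ν * (m : ℝ) ^ (2 * ν)) :=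
  ⟨betaC_le hν hd, fun _ hm => Isum_le hν hd hm⟩
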